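/- Assume char F ≠ 2 and let d ∈ Fˣ. The stabilizer of x(d) in G equals T ∪ σ·T, where T := {(m(a₁,b₁), m(a₂,b₂), m(a₁,b₁)·m(a₂,b₂)⁻¹) : a₁,b₁,a₂,b₂ ∈ F, a₁² − d·b₁² ≠ 0, a₂² − d·b₂² ≠ 0} and σ := (γ, γ, γ) with γ := diag(1,−1); in particular σ stabilizes x(d) and σ·T = T·σ. -/

import Mathlib

open Matrix

/-- `2 × 2` matrices over `F`. -/
abbrev M2 (F : Type*) := Matrix (Fin 2) (Fin 2) F

/-- The right action of `G = GL₂(F) × GL₂(F) × GL₂(F)` on `V = M₂(F) × M₂(F)`. -/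
noncomputable def act {F : Type*} [Field F] (v : M2 F × M2 F)
    (g : GL (Fin 2) F × GL (Fin 2) F × GL (Fin 2) F) : M2 F × M2 F :=
  ((((g.2.2 : M2 F) 0 0) • (((g.1⁻¹ : GL (Fin 2) F) : M2 F) * v.1 * (g.2.1 : M2 F)) +
      ((g.2.2 : M2 F) 1 0) • (((g.1⁻¹ : GL (Fin 2) F) : M2 F) * v.2 * (g.2.1 : M2 F))),
   (((g.2.2 : M2 F) 0 1) • (((g.1⁻¹ : GL (Fin 2) F) : M2 F) * v.1 * (g.2.1 : M2 F)) +
      ((g.2.2 : M2 F) 1 1) • (((g.1⁻¹ : GL (Fin 2) F) : M2 F) * v.2 * (g.2.1 : M2 F))))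

/-- The regular representative `x(d) = (I₂, δ_d)` with `δ_d = [[0,d],[1,0]]`. -/
def xd {F : Type*} [Field F] (d : F) : M2 F × M2 F := ((1 : M2 F), !![0, d; 1, 0])

/-- `m(a,b) = [[a, b·d],[b, a]] = a·I₂ + b·δ_d`. -/
def mm {F : Type*} [Field F] (d a b : F) : M2 F := !![a, b * d; b, a]

/-- `γ = diag(1,−1)` as an element of `GL₂(F)` (it is its own inverse). -/
noncomputable def gammaGL (F : Type*) [Field F] : GL (Fin 2) F :=
  ⟨!![1, 0; 0, -1], !![1, 0; 0, -1],
    by ext i j; fin_cases i <;> fin_cases j <;>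
      simp [Matrix.mul_apply, Fin.sum_univ_two],
    by ext i j; fin_cases i <;> fin_cases j <;>
      simp [Matrix.mul_apply, Fin.sum_univ_two]⟩

/-- The connected part `T` of the stabilizer of `x(d)`. -/
noncomputable def Tset {F : Type*} [Field F] (d : F) :
    Set (GL (Fin 2) F × GL (Fin 2) F × GL (Fin 2) F) :=
  {g | ∃ a₁ b₁ a₂ b₂ : F, a₁ ^ 2 - d * b₁ ^ 2 ≠ 0 ∧ a₂ ^ 2 - d * b₂ ^ 2 ≠ 0 ∧
    (g.1 : M2 F) = mm d a₁ b₁ ∧ (g.2.1 : M2 F) = mm d a₂ b₂ ∧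
    (g.2.2 : M2 F) = mm d a₁ b₁ * (mm d a₂ b₂)⁻¹}

/-!
Let `δ = δ_d` and let `A = F[δ] = {m(a,b)}`, which is exactly the centralizer of `δ` in `M₂(F)`.
Writing `g₃ = [[a,b],[c,e]]`, the element `g` stabilizes `x(d)` iff `m(a,c)·g₂ = g₁` and
`m(b,e)·g₂ = g₁·δ`. Then `w := m(a,c)⁻¹·m(b,e) ∈ A` satisfies `w·g₂ = g₂·δ`, so `w` is conjugate
to `δ`: comparing traces (this is where `char F ≠ 2` enters) and determinants gives `w = ±δ`.
If `w = δ`, then `g₂` (hence `g₁`) lies in `A` and `g₃ = g₁g₂⁻¹`, i.e. `g ∈ T`. If `w = -δ`, then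
`g₂` anticommutes with `δ`, as does `γ`, so `σ·g` is a stabilizer element with `γg₂ ∈ A`.
Conjugation by `γ` is `m(a,b) ↦ m(a,-b)`, so conjugation by `σ` preserves `T`.
-/

section Centralizer

variable {F : Type*} [Field F]

def delta (d : F) : M2 F := !![0, d; 1, 0]

theorem mm_eq_smul_add (d a b : F) : mm d a b = a • 1 + b • delta d := by
  ext i j; fin_cases i <;> fin_cases j <;> simp [mm, delta]

theorem commute_delta_mm (d a b : F) : Commute (delta d) (mm d a b) := by
  rw [mm_eq_smul_add]
  exact ((Commute.one_right _).smul_right a).add_right ((Commute.refl _).smul_right b)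

theorem commute_delta_iff {d : F} {X : M2 F} :
    Commute (delta d) X ↔ X = mm d (X 0 0) (X 1 0) := by
  refine ⟨fun h => ?_, fun h => h ▸ commute_delta_mm d _ _⟩
  have h01 := congrFun (congrFun h.eq 0) 0
  have h11 := congrFun (congrFun h.eq 1) 0
  simp only [delta, Matrix.mul_apply, of_apply, cons_val', cons_val_fin_one, cons_val_zero,
    Fin.sum_univ_two, zero_mul, cons_val_one, zero_add, mul_zero, mul_one, one_mul, add_zero]
    at h01 h11
  ext i j; fin_cases i <;> fin_cases j <;> simp [mm, h11, ← h01, mul_comm]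

theorem mm_mul_delta (d a b : F) : mm d a b * delta d = mm d (b * d) a := by
  ext i j; fin_cases i <;> fin_cases j <;> simp [mm, delta, Matrix.mul_apply, Fin.sum_univ_two]

theorem eq_mm_iff_mm_eq_mm_mul_delta {d : F} {X : M2 F} :
    X = mm d (X 0 0) (X 1 0) ↔ mm d (X 0 1) (X 1 1) = mm d (X 0 0) (X 1 0) * delta d := by
  rw [mm_mul_delta]
  refine ⟨fun h => by rw [h]; simp [mm], fun h => ?_⟩
  have h01 := congrFun (congrFun h 0) 0
  have h11 := congrFun (congrFun h 1) 0
  simp only [mm, of_apply, cons_val', cons_val_zero, cons_val_fin_one, cons_val_one] at h01 h11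
  ext i j; fin_cases i <;> fin_cases j <;> simp [mm, h01, h11]

theorem det_mm (d a b : F) : (mm d a b).det = a ^ 2 - d * b ^ 2 := by
  rw [mm, Matrix.det_fin_two_of]; ring

theorem trace_mm (d a b : F) : (mm d a b).trace = 2 * a := by
  rw [mm, Matrix.trace_fin_two_of]; ring

theorem det_delta (d : F) : (delta d).det = -d := by
  simp [delta, Matrix.det_fin_two]

theorem trace_delta (d : F) : (delta d).trace = 0 := by
  simp [delta, Matrix.trace_fin_two]

theorem eq_delta_or_eq_neg_delta_of_conj (h2 : (2 : F) ≠ 0) {d : F} (hd : d ≠ 0) {w : M2 F}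
    (hw : Commute (delta d) w) (P : GL (Fin 2) F) (hconj : w * P = P * delta d) :
    w = delta d ∨ w = -delta d := by
  have hwP : w = P * delta d * ↑P⁻¹ := (Units.eq_mul_inv_iff_mul_eq P).2 hconj
  rw [commute_delta_iff] at hw
  have htr := congrArg Matrix.trace hwP
  have hdet := congrArg Matrix.det hwP
  rw [Matrix.trace_units_conj, trace_delta, hw, trace_mm] at htr
  rw [Matrix.det_units_conj, det_delta, hw, det_mm] at hdet
  have hα : w 0 0 = 0 := (mul_eq_zero.1 htr).resolve_left h2
  have hβ : (w 1 0 - 1) * (w 1 0 + 1) = 0 := by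
    apply (mul_eq_zero.1 _).resolve_left hd
    linear_combination -hdet + w 0 0 * hα
  rw [hw, hα, mm_eq_smul_add, zero_smul, zero_add]
  rcases mul_eq_zero.1 hβ with h | h
  · left; rw [sub_eq_zero.1 h, one_smul]
  · right; rw [eq_neg_of_add_eq_zero_left h, neg_one_smul]

end Centralizer

section Stabilizer

variable {F : Type*} [Field F]

abbrev GL2Triple (F : Type*) [Field F] := GL (Fin 2) F × GL (Fin 2) F × GL (Fin 2) F

theorem act_mul (v : M2 F × M2 F) (g h : GL2Triple F) : act v (g * h) = act (act v g) h := by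
  simp only [act, Prod.fst_mul, Prod.snd_mul, _root_.mul_inv_rev, Units.val_mul]
  refine Prod.ext ?_ ?_ <;>
  · ext i j
    simp only [Matrix.mul_apply, Fin.sum_univ_two, coe_units_inv, Matrix.add_apply,
      Matrix.smul_apply, smul_eq_mul]
    ring

theorem act_xd (d : F) (g : GL2Triple F) :
    act (xd d) g =
      (↑g.1⁻¹ * mm d (g.2.2 0 0) (g.2.2 1 0) * g.2.1,
        ↑g.1⁻¹ * mm d (g.2.2 0 1) (g.2.2 1 1) * g.2.1) := by
  simp only [act, xd, mm_eq_smul_add, Matrix.mul_add, Matrix.add_mul, Matrix.mul_smul,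
    Matrix.smul_mul, delta]

theorem act_xd_eq_xd_iff {d : F} {g : GL2Triple F} :
    act (xd d) g = xd d ↔
      mm d (g.2.2 0 0) (g.2.2 1 0) * g.2.1 = g.1 ∧
        mm d (g.2.2 0 1) (g.2.2 1 1) * g.2.1 = g.1 * delta d := by
  rw [act_xd, xd, Prod.mk.injEq, mul_assoc, mul_assoc, Units.inv_mul_eq_iff_eq_mul,
    Units.inv_mul_eq_iff_eq_mul, mul_one, delta]

theorem mem_Tset_iff {d : F} {g : GL2Triple F} :
    g ∈ Tset d ↔ Commute (delta d) g.1 ∧ Commute (delta d) g.2.1 ∧ g.2.2 = g.1 * g.2.1⁻¹ := by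
  constructor
  · rintro ⟨a₁, b₁, a₂, b₂, -, -, h₁, h₂, h₃⟩
    refine ⟨h₁ ▸ commute_delta_mm d a₁ b₁, h₂ ▸ commute_delta_mm d a₂ b₂, Units.ext ?_⟩
    rw [h₃, ← h₁, ← h₂, Units.val_mul, Matrix.coe_units_inv]
  · rintro ⟨h₁, h₂, h₃⟩
    rw [commute_delta_iff] at h₁ h₂
    refine ⟨_, _, _, _, ?_, ?_, h₁, h₂, ?_⟩
    · rw [← det_mm, ← h₁]; exact g.1.det_ne_zero
    · rw [← det_mm, ← h₂]; exact g.2.1.det_ne_zero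
    · rw [h₃, ← h₁, ← h₂, Units.val_mul, Matrix.coe_units_inv]

theorem gamma_mul_delta (d : F) :
    (gammaGL F : M2 F) * delta d = -(delta d * gammaGL F) := by
  ext i j; fin_cases i <;> fin_cases j <;>
    simp [gammaGL, delta, Matrix.mul_apply, Fin.sum_univ_two]

theorem gammaGL_mul_self : gammaGL F * gammaGL F = 1 :=
  Units.ext <| by
    ext i j; fin_cases i <;> fin_cases j <;> simp [gammaGL, Matrix.mul_apply, Fin.sum_univ_two]

theorem commute_delta_gamma_mul {d : F} {X : M2 F} (h : delta d * X = -(X * delta d)) :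
    Commute (delta d) (gammaGL F * X) := by
  calc delta d * (gammaGL F * X) = -(gammaGL F * delta d) * X := by
        rw [gamma_mul_delta, neg_neg, mul_assoc]
    _ = gammaGL F * X * delta d := by rw [neg_mul, mul_assoc, h, mul_neg, neg_neg, mul_assoc]

theorem anticommute_delta_mul_gamma {d : F} {X : M2 F} (h : Commute (delta d) X) :
    delta d * (X * gammaGL F) = -(X * gammaGL F * delta d) := by
  rw [← mul_assoc, h.eq, mul_assoc, mul_assoc, gamma_mul_delta, mul_neg, neg_neg]

theorem act_xd_sigma (d : F) : act (xd d) (gammaGL F, gammaGL F, gammaGL F) = xd d := by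
  have hM : mm d ((gammaGL F : M2 F) 0 0) ((gammaGL F : M2 F) 1 0) = 1 := by
    ext i j; fin_cases i <;> fin_cases j <;> simp [gammaGL, mm]
  have hN : mm d ((gammaGL F : M2 F) 0 1) ((gammaGL F : M2 F) 1 1) = -delta d := by
    ext i j; fin_cases i <;> fin_cases j <;> simp [gammaGL, mm, delta]
  rw [act_xd_eq_xd_iff]
  exact ⟨by rw [hM, one_mul], by rw [hN, neg_mul, gamma_mul_delta]⟩

theorem act_xd_of_mem_Tset {d : F} {g : GL2Triple F} (hg : g ∈ Tset d) : act (xd d) g = xd d := by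
  obtain ⟨h₁, h₂, h₃⟩ := mem_Tset_iff.1 hg
  have hg₃ : Commute (delta d) g.2.2 := by
    rw [h₃, Units.val_mul]
    exact h₁.mul_right h₂.units_inv_right
  have hM := commute_delta_iff.1 hg₃
  have hg₃₂ : (g.2.2 * g.2.1 : M2 F) = g.1 := by
    rw [← Units.val_mul, (eq_mul_inv_iff_mul_eq).1 h₃]
  rw [act_xd_eq_xd_iff, eq_mm_iff_mm_eq_mm_mul_delta.1 hM, ← hM]
  refine ⟨hg₃₂, ?_⟩
  rw [mul_assoc, h₂.eq, ← mul_assoc, hg₃₂]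

theorem mem_Tset_of_act_xd_eq_of_commute {d : F} {g : GL2Triple F} (hg : act (xd d) g = xd d)
    (hc : Commute (delta d) g.2.1) : g ∈ Tset d := by
  obtain ⟨hM, hN⟩ := act_xd_eq_xd_iff.1 hg
  have h₁ : Commute (delta d) g.1 := hM ▸ (commute_delta_mm d _ _).mul_right hc
  have h₃ : (g.2.2 : M2 F) = mm d (g.2.2 0 0) (g.2.2 1 0) := by
    rw [eq_mm_iff_mm_eq_mm_mul_delta]
    apply (Units.mul_left_inj g.2.1).1
    simp only [hN, ← hM, mul_assoc, hc.eq]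
  refine mem_Tset_iff.2 ⟨h₁, hc, Units.ext ?_⟩
  rw [Units.val_mul, Units.eq_mul_inv_iff_mul_eq, h₃]
  exact hM

theorem commute_or_anticommute_of_act_xd_eq (h2 : (2 : F) ≠ 0) {d : F} (hd : d ≠ 0)
    {g : GL2Triple F} (hg : act (xd d) g = xd d) :
    Commute (delta d) g.2.1 ∨ delta d * g.2.1 = -(g.2.1 * delta d) := by
  obtain ⟨hM, hN⟩ := act_xd_eq_xd_iff.1 hg
  have hMunit : IsUnit (mm d (g.2.2 0 0) (g.2.2 1 0)) := by
    rw [Matrix.isUnit_iff_isUnit_det, isUnit_iff_ne_zero]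
    intro h0
    apply g.1.det_ne_zero
    rw [← hM, Matrix.det_mul, h0, zero_mul]
  obtain ⟨u, hu⟩ := hMunit
  have hw : Commute (delta d) (↑u⁻¹ * mm d (g.2.2 0 1) (g.2.2 1 1)) :=
    (hu ▸ commute_delta_mm d _ _).units_inv_right.mul_right (commute_delta_mm d _ _)
  have hconj : ↑u⁻¹ * mm d (g.2.2 0 1) (g.2.2 1 1) * g.2.1 = g.2.1 * delta d := by
    rw [mul_assoc, hN, ← hM, ← hu, mul_assoc]
    exact u.inv_mul_cancel_left _
  rcases eq_delta_or_eq_neg_delta_of_conj h2 hd hw g.2.1 hconj with h | h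
  · exact .inl (h ▸ hconj)
  · rw [h, neg_mul] at hconj
    exact .inr (by rw [← hconj, neg_neg])

theorem gammaGL_mul_mul_gammaGL_mem_Tset {d : F} {t : GL2Triple F} (ht : t ∈ Tset d) :
    (gammaGL F, gammaGL F, gammaGL F) * t * (gammaGL F, gammaGL F, gammaGL F) ∈ Tset d := by
  obtain ⟨h₁, h₂, h₃⟩ := mem_Tset_iff.1 ht
  have hγ : (gammaGL F)⁻¹ = gammaGL F := inv_eq_of_mul_eq_one_right gammaGL_mul_self
  have hγγ (x : GL (Fin 2) F) : gammaGL F * (gammaGL F * x) = x := by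
    rw [← mul_assoc, gammaGL_mul_self, one_mul]
  refine mem_Tset_iff.2 ⟨?_, ?_, ?_⟩
  · simpa [mul_assoc] using commute_delta_gamma_mul (anticommute_delta_mul_gamma h₁)
  · simpa [mul_assoc] using commute_delta_gamma_mul (anticommute_delta_mul_gamma h₂)
  · show gammaGL F * t.2.2 * gammaGL F =
      gammaGL F * t.1 * gammaGL F * (gammaGL F * t.2.1 * gammaGL F)⁻¹
    simp only [h₃, _root_.mul_inv_rev, hγ, mul_assoc, hγγ]

end Stabilizer

/-- in characteristic ≠ 2, the stabilizer of `x(d)` in `G` is `T ∪ σ·T`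
where `σ = (γ, γ, γ)`, `γ = diag(1,−1)`; in particular `σ` stabilizes `x(d)` and
`σ·T = T·σ`. -/
theorem stmt6 {F : Type*} [Field F] (h2 : (2 : F) ≠ 0) (d : Fˣ) :
    {g : GL (Fin 2) F × GL (Fin 2) F × GL (Fin 2) F | act (xd (d : F)) g = xd (d : F)} =
        Tset (d : F) ∪
          (fun t => (gammaGL F, gammaGL F, gammaGL F) * t) '' Tset (d : F) ∧
      act (xd (d : F)) (gammaGL F, gammaGL F, gammaGL F) = xd (d : F) ∧
      (fun t => (gammaGL F, gammaGL F, gammaGL F) * t) '' Tset (d : F) =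
        (fun t => t * (gammaGL F, gammaGL F, gammaGL F)) '' Tset (d : F) := by
  set σ : GL2Triple F := (gammaGL F, gammaGL F, gammaGL F)
  have hσ : σ * σ = 1 := Prod.ext gammaGL_mul_self (Prod.ext gammaGL_mul_self gammaGL_mul_self)
  refine ⟨Set.Subset.antisymm (fun g hg => ?_) ?_, act_xd_sigma _, ?_⟩
  · rcases commute_or_anticommute_of_act_xd_eq h2 d.ne_zero hg with hc | hc
    · exact .inl (mem_Tset_of_act_xd_eq_of_commute hg hc)
    · refine .inr ⟨σ * g, mem_Tset_of_act_xd_eq_of_commute ?_ ?_,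
        by simp only [← mul_assoc, hσ, one_mul]⟩
      · rw [act_mul, act_xd_sigma]
        exact hg
      · exact commute_delta_gamma_mul hc
  · rintro g (hg | ⟨t, ht, rfl⟩)
    · exact act_xd_of_mem_Tset hg
    · show act _ (σ * t) = _
      rw [act_mul, act_xd_sigma]
      exact act_xd_of_mem_Tset ht
  · ext g
    constructor
    · rintro ⟨t, ht, rfl⟩
      exact ⟨σ * t * σ, gammaGL_mul_mul_gammaGL_mem_Tset ht, by simp only [mul_assoc, hσ, mul_one]⟩
    · rintro ⟨t, ht, rfl⟩
      exact ⟨σ * t * σ, gammaGL_mul_mul_gammaGL_mem_Tset ht,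
        by simp only [← mul_assoc, hσ, one_mul]⟩
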